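/- arXiv:1610.02260 — 11 statements merged into one kernel-verified Lean document; each statement's English description precedes it below -/
import Mathlib

section
/- Let (A, Con, ⊢, Δ) be an information system with witnesses and x ⊆ A. Then x satisfies both state conditions (ST1): for every finite F ⊆ x there is i ∈ x with F ∈ Con(i), and (ST3): for every a ∈ x there are i ∈ x and finite X ⊆ x with X ∈ Con(i) and (i,X) ⊢ a — if and only if x satisfies condition (ST): for every finite F ⊆ x there exist i ∈ x and finite X ⊆ x with X ∈ Con(i) and (i,X) ⊢ F, given that x also satisfies the entailment-closure condition (ST2): for all i ∈ x, finite X ⊆ x, a ∈ A, if X ∈ Con(i) and (i,X) ⊢ a then a ∈ x. -/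
variable {A : Type*}

/-- An information system with witnesses `(A, Con, ⊢, Δ)`. -/
structure IsISW (Δ : A) (Con : A → Finset A → Prop)
    (ent : A → Finset A → A → Prop) : Prop where
  dom : ∀ i X a, ent i X a → Con i X
  ax1 : ∀ i, Con i {i}
  ax2 : ∀ i (X Y : Finset A), Y ⊆ X → Con i X → Con i Y
  ax3 : ∀ i, ent i ∅ Δ
  ax4 : ∀ i (X Y : Finset A), Con i X → (∀ b ∈ Y, ent i X b) → Con i Y
  ax5 : ∀ i (X Y : Finset A) (a : A), Con i X → Con i Y → X ⊆ Y → ent i X a → ent i Y a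
  ax6 : ∀ i (X Y : Finset A) (a : A), Con i X → (∀ b ∈ Y, ent i X b) → ent i Y a → ent i X a
  ax7 : ∀ i j : A, Con j {i} → ∀ X, Con i X → Con j X
  ax8 : ∀ (i j : A) (X : Finset A) (a : A), Con j {i} → Con i X → ent i X a → ent j X a
  ax9 : ∀ (i j : A) (X : Finset A) (a : A), Con j {i} → Con i X → ent j X a → ent i X a
  ax10 : ∀ i (X Y : Finset A), Con i X → (∀ b ∈ Y, ent i X b) →
      ∃ e Z, Con e Z ∧ ent i X e ∧ (∀ b ∈ Z, ent i X b) ∧ (∀ b ∈ Y, ent e Z b)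

/-- A state of an information system with witnesses: finitely consistent with a
witness in the state (ST1), entailment-closed (ST2), every element derivable (ST3). -/
def IsState (Con : A → Finset A → Prop) (ent : A → Finset A → A → Prop)
    (x : Set A) : Prop :=
  (∀ F : Finset A, ↑F ⊆ x → ∃ i ∈ x, Con i F) ∧
  (∀ i ∈ x, ∀ X : Finset A, ↑X ⊆ x → Con i X → ∀ a, ent i X a → a ∈ x) ∧
  (∀ a ∈ x, ∃ i ∈ x, ∃ X : Finset A, ↑X ⊆ x ∧ Con i X ∧ ent i X a)

/-!
(ST) for singletons is (ST3), and (ST) gives (ST1) through axiom (4). Conversely, derivations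
`(i, X) ⊢ F` and `(j, Y) ⊢ G` inside `x` merge into `(k, X ∪ Y) ⊢ F ∪ G`, where `k ∈ x` witnesses
the consistency of `{i, j} ∪ X ∪ Y` by (ST1) and axioms (8) and (5) move both derivations to `k`;
merging the (ST3) derivations of the elements of `F` one at a time yields (ST).
-/

def EntailedIn (Con : A → Finset A → Prop) (ent : A → Finset A → A → Prop) (x : Set A)
    (F : Finset A) : Prop :=
  ∃ i ∈ x, ∃ X : Finset A, ↑X ⊆ x ∧ Con i X ∧ ∀ b ∈ F, ent i X b

theorem entailedIn_singleton_iff {Con : A → Finset A → Prop} {ent : A → Finset A → A → Prop}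
    {x : Set A} {a : A} :
    EntailedIn Con ent x {a} ↔ ∃ i ∈ x, ∃ X : Finset A, ↑X ⊆ x ∧ Con i X ∧ ent i X a := by
  simp only [EntailedIn, Finset.mem_singleton, forall_eq]

namespace IsISW

variable {Δ : A} {Con : A → Finset A → Prop} {ent : A → Finset A → A → Prop}

theorem con_empty (h : IsISW Δ Con ent) (i : A) : Con i ∅ :=
  h.ax2 i {i} ∅ (Finset.empty_subset _) (h.ax1 i)

theorem ent_transfer (h : IsISW Δ Con ent) {i k b : A} {X Y : Finset A} (hki : Con k {i})
    (hkY : Con k Y) (hXY : X ⊆ Y) (hiX : Con i X) (hb : ent i X b) : ent k Y b :=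
  h.ax5 k X Y b (h.ax2 k Y X hXY hkY) hkY hXY (h.ax8 i k X b hki hiX hb)

theorem exists_con_of_entailedIn (h : IsISW Δ Con ent) {x : Set A} {F : Finset A}
    (hF : EntailedIn Con ent x F) : ∃ i ∈ x, Con i F :=
  let ⟨i, hi, X, _, hiX, hXF⟩ := hF
  ⟨i, hi, h.ax4 i X F hiX hXF⟩

section ST1

variable (h : IsISW Δ Con ent) {x : Set A}
  (hST1 : ∀ F : Finset A, ↑F ⊆ x → ∃ i ∈ x, Con i F)
include h hST1

theorem entailedIn_union [DecidableEq A] {F G : Finset A} (hF : EntailedIn Con ent x F)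
    (hG : EntailedIn Con ent x G) : EntailedIn Con ent x (F ∪ G) := by
  obtain ⟨i, hi, X, hXx, hiX, hXF⟩ := hF
  obtain ⟨j, hj, Y, hYx, hjY, hYG⟩ := hG
  obtain ⟨k, hk, hkW⟩ := hST1 (insert i (insert j (X ∪ Y)))
    (by simp only [Finset.coe_insert, Finset.coe_union, Set.insert_subset_iff,
      Set.union_subset_iff]; exact ⟨hi, hj, hXx, hYx⟩)
  have hsub : ∀ {Z}, Z ⊆ insert i (insert j (X ∪ Y)) → Con k Z := fun hZ => h.ax2 k _ _ hZ hkW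
  have hkXY : Con k (X ∪ Y) := hsub (by intro b hb; simp [hb])
  refine ⟨k, hk, X ∪ Y, by simpa using Set.union_subset hXx hYx, hkXY, fun b hb => ?_⟩
  rcases Finset.mem_union.mp hb with hbF | hbG
  · exact h.ent_transfer (hsub (by simp)) hkXY Finset.subset_union_left hiX (hXF b hbF)
  · exact h.ent_transfer (hsub (by simp)) hkXY Finset.subset_union_right hjY (hYG b hbG)

theorem entailedIn_of_subset (hST3 : ∀ a ∈ x, EntailedIn Con ent x {a}) (F : Finset A)
    (hF : ↑F ⊆ x) : EntailedIn Con ent x F := by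
  classical
  induction F using Finset.induction_on with
  | empty =>
    obtain ⟨i, hi, -⟩ := hST1 ∅ (by simp)
    exact ⟨i, hi, ∅, by simp, h.con_empty i, by simp⟩
  | insert a F _ ih =>
    rw [Finset.coe_insert, Set.insert_subset_iff] at hF
    rw [Finset.insert_eq]
    exact h.entailedIn_union hST1 (hST3 a hF.1) (ih hF.2)

end ST1

end IsISW

theorem stmt5_general {Δ : A} {Con : A → Finset A → Prop} {ent : A → Finset A → A → Prop}
    (h : IsISW Δ Con ent) (x : Set A) :
    ((∀ F : Finset A, ↑F ⊆ x → ∃ i ∈ x, Con i F) ∧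
      (∀ a ∈ x, ∃ i ∈ x, ∃ X : Finset A, ↑X ⊆ x ∧ Con i X ∧ ent i X a)) ↔
    (∀ F : Finset A, ↑F ⊆ x →
      ∃ i ∈ x, ∃ X : Finset A, ↑X ⊆ x ∧ Con i X ∧ ∀ b ∈ F, ent i X b) := by
  constructor
  · rintro ⟨hST1, hST3⟩
    exact h.entailedIn_of_subset hST1 fun a ha => entailedIn_singleton_iff.2 (hST3 a ha)
  · intro hST
    exact ⟨fun F hF => h.exists_con_of_entailedIn (hST F hF),
      fun a ha => entailedIn_singleton_iff.1 (hST {a} (by simpa using ha))⟩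

theorem stmt5 {Δ : A} {Con : A → Finset A → Prop} {ent : A → Finset A → A → Prop}
    (h : IsISW Δ Con ent) (x : Set A)
    (hST2 : ∀ i ∈ x, ∀ X : Finset A, ↑X ⊆ x → Con i X → ∀ a, ent i X a → a ∈ x) :
    ((∀ F : Finset A, ↑F ⊆ x → ∃ i ∈ x, Con i F) ∧
      (∀ a ∈ x, ∃ i ∈ x, ∃ X : Finset A, ↑X ⊆ x ∧ Con i X ∧ ent i X a)) ↔
    (∀ F : Finset A, ↑F ⊆ x →
      ∃ i ∈ x, ∃ X : Finset A, ↑X ⊆ x ∧ Con i X ∧ ∀ b ∈ F, ent i X b) :=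
  stmt5_general h x
end

section
/- Let (A, Con, ⊢, Δ) be an information system with witnesses and z a state. Then the family A_z = {[X]_i : (i,X) ∈ Con, {i} ∪ X ⊆ z} is directed (under inclusion) and its union equals z, where [X]_i = {a : (i,X) ⊢ a}. -/
variable {A : Type*}

/-!
Two approximants `[X]_i` and `[Y]_j` both lie below `[Z]_k`, where `Z = {i, j} ∪ X ∪ Y` and
`k ∈ z` is a witness for `Z` given by (ST1): since `Con k {i}`, the axioms for witnesses let `k`
take over the entailments of `i`, and monotonicity in the premises enlarges `X` to `Z`.
The union of the approximants is contained in `z` by (ST2) and covers it by (ST3).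
-/

namespace IsISW

variable {Δ : A} {Con : A → Finset A → Prop} {ent : A → Finset A → A → Prop}

theorem setOf_ent_subset (h : IsISW Δ Con ent) {i k : A} {X Z : Finset A}
    (hiX : Con i X) (hkZ : Con k Z) (hiZ : i ∈ Z) (hXZ : X ⊆ Z) :
    {a | ent i X a} ⊆ {a | ent k Z a} := by
  intro a ha
  have hki : Con k {i} := h.ax2 k Z {i} (Finset.singleton_subset_iff.mpr hiZ) hkZ
  exact h.ax5 k X Z a (h.ax7 i k hki X hiX) hkZ hXZ (h.ax8 i k X a hki hiX ha)

end IsISW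

def approximants (Con : A → Finset A → Prop) (ent : A → Finset A → A → Prop) (z : Set A) :
    Set (Set A) :=
  {s | ∃ (i : A) (X : Finset A), Con i X ∧ i ∈ z ∧ ↑X ⊆ z ∧ s = {a : A | ent i X a}}

namespace IsState

variable {Δ : A} {Con : A → Finset A → Prop} {ent : A → Finset A → A → Prop} {z : Set A}

theorem approximants_nonempty (hz : IsState Con ent z) : (approximants Con ent z).Nonempty := by
  obtain ⟨i, hi, hci⟩ := hz.1 ∅ (by simp)
  exact ⟨_, i, ∅, hci, hi, by simp, rfl⟩

theorem directedOn_approximants (h : IsISW Δ Con ent) (hz : IsState Con ent z) :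
    DirectedOn (· ⊆ ·) (approximants Con ent z) := by
  classical
  rintro _ ⟨i, X, hiX, hi, hX, rfl⟩ _ ⟨j, Y, hjY, hj, hY, rfl⟩
  set Z : Finset A := insert i (insert j (X ∪ Y))
  have hZ : ↑Z ⊆ z := by
    simp only [Z, Finset.coe_insert, Finset.coe_union, Set.insert_subset_iff, Set.union_subset_iff]
    exact ⟨hi, hj, hX, hY⟩
  obtain ⟨k, hk, hkZ⟩ := hz.1 Z hZ
  refine ⟨_, ⟨k, Z, hkZ, hk, hZ, rfl⟩, ?_, ?_⟩
  · exact h.setOf_ent_subset hiX hkZ (by simp [Z]) fun b hb => by simp [Z, hb]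
  · exact h.setOf_ent_subset hjY hkZ (by simp [Z]) fun b hb => by simp [Z, hb]

theorem sUnion_approximants (hz : IsState Con ent z) : ⋃₀ approximants Con ent z = z := by
  apply subset_antisymm
  · rintro a ⟨_, ⟨i, X, hiX, hi, hX, rfl⟩, ha⟩
    exact hz.2.1 i hi X hX hiX a ha
  · intro a ha
    obtain ⟨i, hi, X, hX, hiX, hia⟩ := hz.2.2 a ha
    exact ⟨_, ⟨i, X, hiX, hi, hX, rfl⟩, hia⟩

end IsState

theorem stmt8 {Δ : A} {Con : A → Finset A → Prop} {ent : A → Finset A → A → Prop}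
    (h : IsISW Δ Con ent) (z : Set A) (hz : IsState Con ent z) :
    ((setOf fun s : Set A =>
        ∃ (i : A) (X : Finset A), Con i X ∧ i ∈ z ∧ ↑X ⊆ z ∧
          s = {a : A | ent i X a}).Nonempty ∧
     DirectedOn (· ⊆ ·)
       (setOf fun s : Set A =>
        ∃ (i : A) (X : Finset A), Con i X ∧ i ∈ z ∧ ↑X ⊆ z ∧
          s = {a : A | ent i X a})) ∧
    ⋃₀ (setOf fun s : Set A =>
        ∃ (i : A) (X : Finset A), Con i X ∧ i ∈ z ∧ ↑X ⊆ z ∧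
          s = {a : A | ent i X a}) = z :=
  ⟨⟨hz.approximants_nonempty, hz.directedOn_approximants h⟩, hz.sUnion_approximants⟩
end

section
/- Let (A, Con, ⊢, Δ) be an information system with witnesses and x, y states. Then x ≪ y in the poset of states ordered by inclusion if and only if there exists (i,V) ∈ Con with {i} ∪ V ⊆ y and (i,V) ⊢ a for every a ∈ x. -/
/-!
For a consistent pair `(j, W)` the set `{a | (j, W) ⊢ a}` is a state, and the principal states
generated by pairs with `{j} ∪ W ⊆ y` form a directed family whose union is `y` (by ST3).
Applying `x ≪ y` to this family yields the pair. Conversely, if `{i} ∪ V ⊆ y` then this finite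
set lies in a single member `s` of any directed cover of `y`, and entailment-closure of `s` gives
`x ⊆ s`.
-/

variable {A : Type*}

/-- The way-below relation on the poset of states ordered by inclusion, where
directed suprema are given by unions. -/
def WayBelowSt (Con : A → Finset A → Prop) (ent : A → Finset A → A → Prop)
    (x y : Set A) : Prop :=
  ∀ 𝒮 : Set (Set A), (∀ s ∈ 𝒮, IsState Con ent s) → 𝒮.Nonempty →
    DirectedOn (· ⊆ ·) 𝒮 → y ⊆ ⋃₀ 𝒮 → ∃ s ∈ 𝒮, x ⊆ s

section

variable {Δ : A} {Con : A → Finset A → Prop} {ent : A → Finset A → A → Prop}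

def principalStates (Con : A → Finset A → Prop) (ent : A → Finset A → A → Prop)
    (y : Set A) : Set (Set A) :=
  {s | ∃ j W, Con j W ∧ j ∈ y ∧ ↑W ⊆ y ∧ s = {a | ent j W a}}

namespace IsISW

theorem isState_setOf_ent (h : IsISW Δ Con ent) {j : A} {W : Finset A} (hc : Con j W) :
    IsState Con ent {a | ent j W a} := by
  refine ⟨fun F hF => ?_, fun i hi X hX hciX a ha => ?_, fun a ha => ?_⟩
  · obtain ⟨e, Z, hcZ, hje, -, heF⟩ := h.ax10 j W F hc (fun b hb => hF hb)
    exact ⟨e, hje, h.ax4 e Z F hcZ heF⟩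
  · have hji : Con j {i} := h.ax4 j W {i} hc (by simpa using hi)
    exact h.ax6 j W X a hc (fun b hb => hX hb) (h.ax8 i j X a hji hciX ha)
  · obtain ⟨e, Z, hcZ, hje, hjZ, hea⟩ := h.ax10 j W {a} hc (by simpa using ha)
    exact ⟨e, hje, Z, fun b hb => hjZ b hb, hcZ, hea a (Finset.mem_singleton_self a)⟩

theorem setOf_ent_subset_s9 (h : IsISW Δ Con ent) {j m : A} {W F : Finset A}
    (hcW : Con j W) (hcF : Con m F) (hjF : j ∈ F) (hWF : W ⊆ F) :
    {a | ent j W a} ⊆ {a | ent m F a} := fun a ha =>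
  have hmj : Con m {j} := h.ax2 m F {j} (Finset.singleton_subset_iff.2 hjF) hcF
  h.ax5 m W F a (h.ax7 j m hmj W hcW) hcF hWF (h.ax8 j m W a hmj hcW ha)

theorem directedOn_principalStates (h : IsISW Δ Con ent) {y : Set A}
    (hy : IsState Con ent y) : DirectedOn (· ⊆ ·) (principalStates Con ent y) := by
  classical
  rintro _ ⟨j, W, hcW, hjy, hWy, rfl⟩ _ ⟨k, U, hcU, hky, hUy, rfl⟩
  set F : Finset A := insert j (insert k (W ∪ U))
  have hFy : ↑F ⊆ y := by
    simp only [F, Finset.coe_insert, Finset.coe_union, Set.insert_subset_iff,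
      Set.union_subset_iff]
    exact ⟨hjy, hky, hWy, hUy⟩
  obtain ⟨m, hmy, hcF⟩ := hy.1 F hFy
  refine ⟨{a | ent m F a}, ⟨m, F, hcF, hmy, hFy, rfl⟩, ?_, ?_⟩
  · exact h.setOf_ent_subset_s9 hcW hcF (by simp [F]) (fun b hb => by simp [F, hb])
  · exact h.setOf_ent_subset_s9 hcU hcF (by simp [F]) (fun b hb => by simp [F, hb])

theorem exists_ent_of_wayBelowSt (h : IsISW Δ Con ent) {x y : Set A}
    (hy : IsState Con ent y) (hxy : WayBelowSt Con ent x y) :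
    ∃ (i : A) (V : Finset A), Con i V ∧ i ∈ y ∧ ↑V ⊆ y ∧ ∀ a ∈ x, ent i V a := by
  have hstates : ∀ s ∈ principalStates Con ent y, IsState Con ent s := by
    rintro _ ⟨j, W, hc, -, -, rfl⟩
    exact h.isState_setOf_ent hc
  have hne : (principalStates Con ent y).Nonempty := by
    obtain ⟨i, hiy, hc⟩ := hy.1 ∅ (by simp)
    exact ⟨_, i, ∅, hc, hiy, by simp, rfl⟩
  have hcover : y ⊆ ⋃₀ principalStates Con ent y := fun a ha => by
    obtain ⟨i, hiy, X, hXy, hcX, hent⟩ := hy.2.2 a ha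
    exact ⟨_, ⟨i, X, hcX, hiy, hXy, rfl⟩, hent⟩
  obtain ⟨_, ⟨i, V, hcV, hiy, hVy, rfl⟩, hxs⟩ :=
    hxy _ hstates hne (h.directedOn_principalStates hy) hcover
  exact ⟨i, V, hcV, hiy, hVy, fun a ha => hxs ha⟩

end IsISW

theorem wayBelowSt_of_ent {x y : Set A} {i : A} {V : Finset A} (hcV : Con i V) (hiy : i ∈ y)
    (hVy : ↑V ⊆ y) (hx : ∀ a ∈ x, ent i V a) : WayBelowSt Con ent x y := by
  classical
  intro 𝒮 hstates hne hdir hcover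
  have hsub : (↑(insert i V) : Set A) ⊆ ⋃ s ∈ 𝒮, s := by
    rw [← Set.sUnion_eq_biUnion, Finset.coe_insert, Set.insert_subset_iff]
    exact ⟨hcover hiy, hVy.trans hcover⟩
  obtain ⟨s, hs𝒮, hss⟩ := DirectedOn.exists_mem_subset_of_finset_subset_biUnion hne hdir hsub
  rw [Finset.coe_insert, Set.insert_subset_iff] at hss
  exact ⟨s, hs𝒮, fun a ha => (hstates s hs𝒮).2.1 i hss.1 V hss.2 hcV a (hx a ha)⟩

end

theorem stmt9_general {Δ : A} {Con : A → Finset A → Prop} {ent : A → Finset A → A → Prop}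
    (h : IsISW Δ Con ent) (x y : Set A)
    (hy : IsState Con ent y) :
    WayBelowSt Con ent x y ↔
      ∃ (i : A) (V : Finset A), Con i V ∧ i ∈ y ∧ ↑V ⊆ y ∧ ∀ a ∈ x, ent i V a :=
  ⟨h.exists_ent_of_wayBelowSt hy,
    fun ⟨_, _, hcV, hiy, hVy, hx⟩ => wayBelowSt_of_ent hcV hiy hVy hx⟩

theorem stmt9 {Δ : A} {Con : A → Finset A → Prop} {ent : A → Finset A → A → Prop}
    (h : IsISW Δ Con ent) (x y : Set A)
    (hx : IsState Con ent x) (hy : IsState Con ent y) :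
    WayBelowSt Con ent x y ↔
      ∃ (i : A) (V : Finset A), Con i V ∧ i ∈ y ∧ ↑V ⊆ y ∧ ∀ a ∈ x, ent i V a :=
  stmt9_general h x y hy
end

section
/- Let (A, Con, ⊢, Δ) be an information system with witnesses and x, y, z states with x ⊆ z and y ⊆ z. Then the union ⋃{[Z]_k : (k,Z) ∈ Con, k ∈ z, Z ⊆ x ∪ y finite} is the least upper bound of x and y in the set of states contained in z. -/
/-!
Finitely many elements of the union, each entailed by its own witness in `z`, have a common
witness in `z`: consistency of `z` gives one witness consistent with all the old witnesses and
premises, and axioms 8 and 5 move the entailments to it. Axiom 10 replaces it by a witness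
that itself lies in the union, which yields the state axioms. For minimality, a witness of `w`
and the witness `k` have a common witness in `z`, through which axioms 8 and 9 transport
`(k, Z) ⊢ a` into `w`.
-/

variable {A : Type*}

/-- In the paper's notation, `⋃ {[Z]_k : (k, Z) ∈ Con, k ∈ z, Z ⊆ S finite}`. -/
def closureIn (Con : A → Finset A → Prop) (ent : A → Finset A → A → Prop) (z S : Set A) :
    Set A :=
  {a | ∃ (k : A) (Z : Finset A), Con k Z ∧ k ∈ z ∧ ↑Z ⊆ S ∧ ent k Z a}

section

variable {Con : A → Finset A → Prop} {ent : A → Finset A → A → Prop}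

theorem sUnion_eq_closureIn (z S : Set A) :
    ⋃₀ (setOf fun s : Set A => ∃ (k : A) (Z : Finset A),
        Con k Z ∧ k ∈ z ∧ ↑Z ⊆ S ∧ s = {a : A | ent k Z a}) = closureIn Con ent z S := by
  ext a
  constructor
  · rintro ⟨s, ⟨k, Z, hkZ, hk, hZ, rfl⟩, ha⟩
    exact ⟨k, Z, hkZ, hk, hZ, ha⟩
  · rintro ⟨k, Z, hkZ, hk, hZ, ha⟩
    exact ⟨_, ⟨k, Z, hkZ, hk, hZ, rfl⟩, ha⟩

theorem closureIn_subset {z S : Set A} (hz : IsState Con ent z) (hSz : S ⊆ z) :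
    closureIn Con ent z S ⊆ z := by
  rintro a ⟨k, Z, hkZ, hk, hZS, ha⟩
  exact hz.2.1 k hk Z (hZS.trans hSz) hkZ a ha

theorem subset_closureIn {x z S : Set A} (hx : IsState Con ent x) (hxS : x ⊆ S)
    (hSz : S ⊆ z) : x ⊆ closureIn Con ent z S := by
  intro a ha
  obtain ⟨i, hi, X, hXx, hiX, hia⟩ := hx.2.2 a ha
  exact ⟨i, X, hiX, hSz (hxS hi), hXx.trans hxS, hia⟩

namespace IsISW

variable {Δ : A}

theorem ent_of_con_singleton_of_subset (h : IsISW Δ Con ent) {m k : A} {W Z : Finset A}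
    {b : A} (hmk : Con m {k}) (hkW : Con k W) (hmZ : Con m Z) (hWZ : W ⊆ Z)
    (hb : ent k W b) : ent m Z b :=
  h.ax5 m W Z b (h.ax2 m Z W hWZ hmZ) hmZ hWZ (h.ax8 k m W b hmk hkW hb)

theorem exists_common_witness [DecidableEq A] (h : IsISW Δ Con ent) {z S : Set A}
    (hz : IsState Con ent z) (hSz : S ⊆ z) (F : Finset A) (hF : ↑F ⊆ closureIn Con ent z S)
    (E : Finset A) (hE : ↑E ⊆ z) :
    ∃ m ∈ z, ∃ Z : Finset A, ↑Z ⊆ S ∧ Con m (E ∪ Z) ∧ ∀ b ∈ F, ent m Z b := by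
  induction F using Finset.induction_on generalizing E with
  | empty =>
    obtain ⟨m, hm, hmE⟩ := hz.1 E hE
    exact ⟨m, hm, ∅, by simp, by simpa using hmE, by simp⟩
  | insert b F _ ih =>
    rw [Finset.coe_insert, Set.insert_subset_iff] at hF
    obtain ⟨k, W, hkW, hk, hWS, hb⟩ := hF.1
    -- Enlarging `E` by `k` and `W` makes the witness from `ih` consistent with them too.
    have hE' : ↑(insert k (E ∪ W)) ⊆ z := by
      simpa [Set.insert_subset_iff, hk, hE] using hWS.trans hSz
    obtain ⟨m, hm, Z, hZS, hmZ, hF'⟩ := ih hF.2 _ hE'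
    have hm' : Con m (E ∪ (Z ∪ W)) := h.ax2 m _ _ (by grind) hmZ
    have hmZW : Con m (Z ∪ W) := h.ax2 m _ _ Finset.subset_union_right hm'
    refine ⟨m, hm, Z ∪ W, by simp [hZS, hWS], hm', ?_⟩
    rw [Finset.forall_mem_insert]
    refine ⟨h.ent_of_con_singleton_of_subset (h.ax2 m _ _ (by grind) hmZ) hkW hmZW
      Finset.subset_union_right hb, fun c hc => ?_⟩
    exact h.ax5 m Z _ c (h.ax2 m _ _ (by grind) hmZ) hmZW Finset.subset_union_left (hF' c hc)

theorem isState_closureIn (h : IsISW Δ Con ent) {z S : Set A} (hz : IsState Con ent z)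
    (hSz : S ⊆ z) : IsState Con ent (closureIn Con ent z S) := by
  classical
  refine ⟨fun F hF => ?_, fun i hi X hX hiX a ha => ?_, fun a ha => ?_⟩
  · obtain ⟨m, hm, Z, hZS, hmZ, hFZ⟩ := h.exists_common_witness hz hSz F hF ∅ (by simp)
    rw [Finset.empty_union] at hmZ
    obtain ⟨e, V, heV, hme, -, heF⟩ := h.ax10 m Z F hmZ hFZ
    exact ⟨e, ⟨m, Z, hmZ, hm, hZS, hme⟩, h.ax4 e V F heV heF⟩
  · obtain ⟨m, hm, Z, hZS, hmZ, hXZ⟩ := h.exists_common_witness hz hSz X hX {i}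
      (by simpa using closureIn_subset hz hSz hi)
    have hmX : ent m X a := h.ax8 i m X a (h.ax2 m _ _ Finset.subset_union_left hmZ) hiX ha
    have hmZ' : Con m Z := h.ax2 m _ _ Finset.subset_union_right hmZ
    exact ⟨m, Z, hmZ', hm, hZS, h.ax6 m Z X a hmZ' hXZ hmX⟩
  · obtain ⟨k, Z, hkZ, hk, hZS, hka⟩ := ha
    obtain ⟨e, V, heV, hke, hkV, hea⟩ := h.ax10 k Z {a} hkZ (by simpa using hka)
    exact ⟨e, ⟨k, Z, hkZ, hk, hZS, hke⟩, V, fun c hc => ⟨k, Z, hkZ, hk, hZS, hkV c hc⟩, heV,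
      hea a (Finset.mem_singleton_self a)⟩

theorem closureIn_subset_of_isState (h : IsISW Δ Con ent) {w z S : Set A}
    (hz : IsState Con ent z) (hw : IsState Con ent w) (hwz : w ⊆ z) (hSw : S ⊆ w) :
    closureIn Con ent z S ⊆ w := by
  classical
  rintro a ⟨k, Z, hkZ, hk, hZS, hka⟩
  obtain ⟨j, hj, hjZ⟩ := hw.1 Z (hZS.trans hSw)
  obtain ⟨m, -, hm⟩ := hz.1 {j, k} (by simp [Set.insert_subset_iff, hwz hj, hk])
  have hma : ent m Z a := h.ax8 k m Z a (h.ax2 m _ _ (by simp) hm) hkZ hka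
  have hja : ent j Z a := h.ax9 j m Z a (h.ax2 m _ _ (by simp) hm) hjZ hma
  exact hw.2.1 j hj Z (hZS.trans hSw) hjZ a hja

end IsISW

end

theorem stmt11 {Δ : A} {Con : A → Finset A → Prop} {ent : A → Finset A → A → Prop}
    (h : IsISW Δ Con ent) (x y z : Set A)
    (hx : IsState Con ent x) (hy : IsState Con ent y) (hz : IsState Con ent z)
    (hxz : x ⊆ z) (hyz : y ⊆ z) :
    IsState Con ent
      (⋃₀ (setOf fun s : Set A => ∃ (k : A) (Z : Finset A),
        Con k Z ∧ k ∈ z ∧ ↑Z ⊆ x ∪ y ∧ s = {a : A | ent k Z a})) ∧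
    (⋃₀ (setOf fun s : Set A => ∃ (k : A) (Z : Finset A),
        Con k Z ∧ k ∈ z ∧ ↑Z ⊆ x ∪ y ∧ s = {a : A | ent k Z a})) ⊆ z ∧
    x ⊆ (⋃₀ (setOf fun s : Set A => ∃ (k : A) (Z : Finset A),
        Con k Z ∧ k ∈ z ∧ ↑Z ⊆ x ∪ y ∧ s = {a : A | ent k Z a})) ∧
    y ⊆ (⋃₀ (setOf fun s : Set A => ∃ (k : A) (Z : Finset A),
        Con k Z ∧ k ∈ z ∧ ↑Z ⊆ x ∪ y ∧ s = {a : A | ent k Z a})) ∧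
    ∀ w : Set A, IsState Con ent w → w ⊆ z → x ⊆ w → y ⊆ w →
      (⋃₀ (setOf fun s : Set A => ∃ (k : A) (Z : Finset A),
        Con k Z ∧ k ∈ z ∧ ↑Z ⊆ x ∪ y ∧ s = {a : A | ent k Z a})) ⊆ w := by
  rw [sUnion_eq_closureIn]
  have hxyz : x ∪ y ⊆ z := Set.union_subset hxz hyz
  exact ⟨h.isState_closureIn hz hxyz, closureIn_subset hz hxyz,
    subset_closureIn hx Set.subset_union_left hxyz,
    subset_closureIn hy Set.subset_union_right hxyz,
    fun w hw hwz hxw hyw => h.closureIn_subset_of_isState hz hw hwz (Set.union_subset hxw hyw)⟩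
end

section
/- Let (A, Con, ⊢, Δ) be an information system with witnesses. Then the poset of states (|A|, ⊆) is an L-domain: it is a pointed continuous dcpo (with basis {[X]_i : (i,X) ∈ Con}) in which every pair of states bounded above by z has a least upper bound among the states contained in z. -/
variable {A : Type*}

/-!
States form a dcpo under directed unions, with least element `[∅]_Δ` (every state contains `Δ`
by (ST1), (ST2) and axiom 3). The principal sets `[X]_i` are states (axiom 10 supplies the
witnesses), and those with `i ∈ z`, `X ⊆ z` are way below `z` and form a directed family with
union `z`. The key fact behind the L-property is that inside a state `z` entailment does not
depend on the witness: any two witnesses in `z` are jointly consistent with a third one, and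
axioms 8–9 move entailments along it. Hence for `x, y ⊆ z` the set of all `a` entailed from
`x ∪ y` by some witness in `z` is a state, and it is the least state between `x ∪ y` and `z`.
-/

variable {Δ : A} {Con : A → Finset A → Prop} {ent : A → Finset A → A → Prop}

namespace IsState

variable {x : Set A} (hx : IsState Con ent x)
include hx

theorem exists_con (F : Finset A) (hF : ↑F ⊆ x) : ∃ i ∈ x, Con i F :=
  hx.1 F hF

theorem setOf_ent_subset {i : A} {X : Finset A} (hi : i ∈ x) (hX : ↑X ⊆ x) (hC : Con i X) :
    {a | ent i X a} ⊆ x :=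
  fun a => hx.2.1 i hi X hX hC a

theorem exists_ent {a : A} (ha : a ∈ x) :
    ∃ i ∈ x, ∃ X : Finset A, ↑X ⊆ x ∧ Con i X ∧ ent i X a :=
  hx.2.2 a ha

end IsState

theorem isState_sUnion {𝒮 : Set (Set A)} (hS : ∀ s ∈ 𝒮, IsState Con ent s) (hne : 𝒮.Nonempty)
    (hdir : DirectedOn (· ⊆ ·) 𝒮) : IsState Con ent (⋃₀ 𝒮) := by
  refine ⟨fun F hF => ?_, fun i hi X hX hC a ha => ?_, fun a ha => ?_⟩
  · obtain ⟨s, hs, hFs⟩ := hdir.exists_mem_subset_of_finite_of_subset_sUnion hne F.finite_toSet hF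
    obtain ⟨i, hi, hCi⟩ := (hS s hs).exists_con F hFs
    exact ⟨i, Set.mem_sUnion_of_mem hi hs, hCi⟩
  · obtain ⟨s, hs, his⟩ := hi
    obtain ⟨t, ht, hXt⟩ := hdir.exists_mem_subset_of_finite_of_subset_sUnion hne X.finite_toSet hX
    obtain ⟨u, hu, hsu, htu⟩ := hdir s hs t ht
    exact Set.mem_sUnion_of_mem ((hS u hu).setOf_ent_subset (hsu his) (hXt.trans htu) hC ha) hu
  · obtain ⟨s, hs, has⟩ := ha
    obtain ⟨i, hi, X, hX, hC, hai⟩ := (hS s hs).exists_ent has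
    exact ⟨i, Set.mem_sUnion_of_mem hi hs, X, hX.trans (Set.subset_sUnion_of_mem hs), hC, hai⟩

def basisBelow (Con : A → Finset A → Prop) (ent : A → Finset A → A → Prop) (z : Set A) :
    Set (Set A) :=
  {s | ∃ i ∈ z, ∃ X : Finset A, ↑X ⊆ z ∧ Con i X ∧ s = {a | ent i X a}}

def spanWithin (Con : A → Finset A → Prop) (ent : A → Finset A → A → Prop) (z u : Set A) :
    Set A :=
  {a | ∃ i ∈ z, ∃ X : Finset A, ↑X ⊆ u ∧ Con i X ∧ ent i X a}

namespace IsISW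

variable (h : IsISW Δ Con ent)
include h

theorem con_empty_s12 (i : A) : Con i ∅ :=
  h.ax2 i {i} ∅ (Finset.empty_subset _) (h.ax1 i)

theorem con_singleton_of_ent {i a : A} {X : Finset A} (ha : ent i X a) : Con i {a} :=
  h.ax4 i X {a} (h.dom i X a ha) (by simpa using ha)

theorem isState_setOf_ent_s12 {i : A} {X : Finset A} (hC : Con i X) :
    IsState Con ent {a | ent i X a} := by
  refine ⟨fun F hF => ?_, fun j hj Y hY hCjY a ha => ?_, fun a ha => ?_⟩
  · obtain ⟨e, Z, hCeZ, hie, -, hFe⟩ := h.ax10 i X F hC fun b hb => hF hb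
    exact ⟨e, hie, h.ax4 e Z F hCeZ hFe⟩
  · exact h.ax6 i X Y a hC (fun b hb => hY hb)
      (h.ax8 j i Y a (h.con_singleton_of_ent hj) hCjY ha)
  · obtain ⟨e, Z, hCeZ, hie, hZ, hae⟩ := h.ax10 i X {a} hC (by simpa using ha)
    exact ⟨e, hie, Z, fun b hb => hZ b hb, hCeZ, hae a (Finset.mem_singleton_self a)⟩

theorem isState_of_forall_finset {s : Set A}
    (hs : ∀ F : Finset A, ↑F ⊆ s →
      ∃ m W, Con m W ∧ ↑F ⊆ {a | ent m W a} ∧ {a | ent m W a} ⊆ s) :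
    IsState Con ent s := by
  classical
  refine ⟨fun F hF => ?_, fun i hi X hX hC a ha => ?_, fun a ha => ?_⟩
  · obtain ⟨m, W, hW, hF, hs⟩ := hs F hF
    obtain ⟨i, hi, hCi⟩ := (h.isState_setOf_ent_s12 hW).exists_con F hF
    exact ⟨i, hs hi, hCi⟩
  · obtain ⟨m, W, hW, hF, hs⟩ := hs (insert i X) <| by
      rw [Finset.coe_insert]; exact Set.insert_subset hi hX
    simp only [Finset.coe_insert, Set.insert_subset_iff] at hF
    exact hs <| (h.isState_setOf_ent_s12 hW).setOf_ent_subset hF.1 hF.2 hC ha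
  · obtain ⟨m, W, hW, hF, hs⟩ := hs {a} (by simpa using ha)
    obtain ⟨i, hi, X, hX, hC, hai⟩ :=
      (h.isState_setOf_ent_s12 hW).exists_ent (hF (Finset.mem_coe.2 (Finset.mem_singleton_self a)))
    exact ⟨i, hs hi, X, hX.trans hs, hC, hai⟩

theorem delta_mem_of_isState {x : Set A} (hx : IsState Con ent x) : Δ ∈ x := by
  obtain ⟨i, hi, hCi⟩ := hx.exists_con ∅ (by simp)
  exact hx.setOf_ent_subset hi (by simp) hCi (h.ax3 i)

theorem setOf_ent_delta_subset {x : Set A} (hx : IsState Con ent x) :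
    {a | ent Δ ∅ a} ⊆ x :=
  hx.setOf_ent_subset (h.delta_mem_of_isState hx) (by simp) (h.con_empty_s12 Δ)

theorem ent_of_ent_of_mem {z : Set A} (hz : IsState Con ent z) {i k a : A} {X Y : Finset A}
    (hi : i ∈ z) (hk : k ∈ z) (hXY : X ⊆ Y) (hY : Con k Y) (ha : ent i X a) : ent k Y a := by
  classical
  obtain ⟨j, -, hj⟩ := hz.exists_con {i, k} (by simp [Set.insert_subset_iff, hi, hk])
  have hCkX : Con k X := h.ax2 k Y X hXY hY
  have hji : Con j {i} := h.ax2 j _ _ (by simp) hj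
  have hjk : Con j {k} := h.ax2 j _ _ (by simp) hj
  have hkX : ent k X a := h.ax9 k j X a hjk hCkX (h.ax8 i j X a hji (h.dom i X a ha) ha)
  exact h.ax5 k X Y a hCkX hY hXY hkX

theorem directedOn_basisBelow {z : Set A} (hz : IsState Con ent z) :
    DirectedOn (· ⊆ ·) (basisBelow Con ent z) := by
  classical
  rintro _ ⟨i, hi, X, hX, -, rfl⟩ _ ⟨j, hj, Y, hY, -, rfl⟩
  have hXY : ↑(X ∪ Y) ⊆ z := by simpa using ⟨hX, hY⟩
  obtain ⟨k, hk, hC⟩ := hz.exists_con (X ∪ Y) hXY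
  exact ⟨_, ⟨k, hk, X ∪ Y, hXY, hC, rfl⟩,
    fun a => h.ent_of_ent_of_mem hz hi hk Finset.subset_union_left hC,
    fun a => h.ent_of_ent_of_mem hz hj hk Finset.subset_union_right hC⟩

theorem exists_common_witness_s12 {z u : Set A} (hz : IsState Con ent z) (huz : u ⊆ z)
    (F : Finset A) (hF : ↑F ⊆ spanWithin Con ent z u) :
    ∃ m ∈ z, ∃ W : Finset A, ↑W ⊆ u ∧ Con m W ∧ ∀ a ∈ F, ent m W a := by
  classical
  induction F using Finset.induction_on with
  | empty =>
    obtain ⟨m, hm, hC⟩ := hz.exists_con ∅ (by simp)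
    exact ⟨m, hm, ∅, by simp, hC, by simp⟩
  | insert a F _ ih =>
    simp only [Finset.coe_insert, Set.insert_subset_iff] at hF
    obtain ⟨m, hm, W, hW, -, hmW⟩ := ih hF.2
    obtain ⟨i, hi, X, hX, -, hiX⟩ := hF.1
    have hWX : ↑(W ∪ X) ⊆ u := by simpa using ⟨hW, hX⟩
    obtain ⟨k, hk, hC⟩ := hz.exists_con (W ∪ X) (hWX.trans huz)
    refine ⟨k, hk, W ∪ X, hWX, hC, (Finset.forall_mem_insert _ _ _).2 ⟨?_, fun b hb => ?_⟩⟩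
    · exact h.ent_of_ent_of_mem hz hi hk Finset.subset_union_right hC hiX
    · exact h.ent_of_ent_of_mem hz hm hk Finset.subset_union_left hC (hmW b hb)

theorem isState_spanWithin {z u : Set A} (hz : IsState Con ent z) (huz : u ⊆ z) :
    IsState Con ent (spanWithin Con ent z u) := by
  refine h.isState_of_forall_finset fun F hF => ?_
  obtain ⟨m, hm, W, hW, hC, hmW⟩ := h.exists_common_witness_s12 hz huz F hF
  exact ⟨m, W, hC, hmW, fun a ha => ⟨m, hm, W, hW, hC, ha⟩⟩

theorem spanWithin_subset_of_isState {z u w : Set A} (hz : IsState Con ent z)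
    (hw : IsState Con ent w) (hwz : w ⊆ z) (huw : u ⊆ w) : spanWithin Con ent z u ⊆ w := by
  rintro a ⟨i, hi, X, hX, -, ha⟩
  obtain ⟨j, hj, hC⟩ := hw.exists_con X (hX.trans huw)
  exact hw.setOf_ent_subset hj (hX.trans huw) hC
    (h.ent_of_ent_of_mem hz hi (hwz hj) subset_rfl hC ha)

end IsISW

theorem wayBelowSt_setOf_ent {z : Set A} {i : A} {X : Finset A} (hi : i ∈ z) (hX : ↑X ⊆ z)
    (hC : Con i X) : WayBelowSt Con ent {a | ent i X a} z := by
  classical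
  intro 𝒯 h𝒯 hne hdir hz
  obtain ⟨t, ht, hit⟩ := hdir.exists_mem_subset_of_finite_of_subset_sUnion hne
    (insert i X).finite_toSet (by simpa [Set.insert_subset_iff] using ⟨hz hi, hX.trans hz⟩)
  simp only [Finset.coe_insert, Set.insert_subset_iff] at hit
  exact ⟨t, ht, (h𝒯 t ht).setOf_ent_subset hit.1 hit.2 hC⟩

theorem sUnion_basisBelow {z : Set A} (hz : IsState Con ent z) :
    ⋃₀ basisBelow Con ent z = z := by
  refine subset_antisymm ?_ fun a ha => ?_
  · rintro a ⟨_, ⟨i, hi, X, hX, hC, rfl⟩, ha⟩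
    exact hz.setOf_ent_subset hi hX hC ha
  · obtain ⟨i, hi, X, hX, hC, hai⟩ := hz.exists_ent ha
    exact ⟨_, ⟨i, hi, X, hX, hC, rfl⟩, hai⟩

theorem subset_spanWithin {x z u : Set A} (hx : IsState Con ent x) (hxz : x ⊆ z) (hxu : x ⊆ u) :
    x ⊆ spanWithin Con ent z u := fun a ha => by
  obtain ⟨i, hi, X, hX, hC, hai⟩ := hx.exists_ent ha
  exact ⟨i, hxz hi, X, hX.trans hxu, hC, hai⟩

theorem stmt12 {Δ : A} {Con : A → Finset A → Prop} {ent : A → Finset A → A → Prop}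
    (h : IsISW Δ Con ent) :
    -- pointed
    (∃ b : Set A, IsState Con ent b ∧ ∀ x : Set A, IsState Con ent x → b ⊆ x) ∧
    -- directed-complete (suprema are unions)
    (∀ 𝒮 : Set (Set A), (∀ s ∈ 𝒮, IsState Con ent s) → 𝒮.Nonempty →
      DirectedOn (· ⊆ ·) 𝒮 → IsState Con ent (⋃₀ 𝒮) ∧
        (∀ s ∈ 𝒮, s ⊆ ⋃₀ 𝒮) ∧
        ∀ w : Set A, IsState Con ent w → (∀ s ∈ 𝒮, s ⊆ w) → ⋃₀ 𝒮 ⊆ w) ∧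
    -- continuity with basis {[X]_i : (i,X) ∈ Con}
    (∀ z : Set A, IsState Con ent z →
      ∃ 𝒮 : Set (Set A),
        (∀ s ∈ 𝒮, (∃ (i : A) (X : Finset A), Con i X ∧ s = {a : A | ent i X a}) ∧
          WayBelowSt Con ent s z) ∧
        𝒮.Nonempty ∧ DirectedOn (· ⊆ ·) 𝒮 ∧ ⋃₀ 𝒮 = z) ∧
    -- local least upper bounds (the L-property)
    (∀ x y z : Set A, IsState Con ent x → IsState Con ent y → IsState Con ent z →
      x ⊆ z → y ⊆ z →
      ∃ s : Set A, IsState Con ent s ∧ s ⊆ z ∧ x ⊆ s ∧ y ⊆ s ∧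
        ∀ w : Set A, IsState Con ent w → w ⊆ z → x ⊆ w → y ⊆ w → s ⊆ w) := by
  refine ⟨⟨_, h.isState_setOf_ent_s12 (h.con_empty_s12 Δ), fun _ => h.setOf_ent_delta_subset⟩,
    fun 𝒮 hS hne hdir => ⟨isState_sUnion hS hne hdir, fun _ => Set.subset_sUnion_of_mem,
      fun _ _ => Set.sUnion_subset⟩,
    fun z hz => ⟨basisBelow Con ent z, ?_, ?_, h.directedOn_basisBelow hz, sUnion_basisBelow hz⟩,
    fun x y z hx hy hz hxz hyz => ⟨spanWithin Con ent z (x ∪ y), ?_⟩⟩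
  · rintro _ ⟨i, hi, X, hX, hC, rfl⟩
    exact ⟨⟨i, X, hC, rfl⟩, wayBelowSt_setOf_ent hi hX hC⟩
  · obtain ⟨i, hi, hC⟩ := hz.exists_con ∅ (by simp)
    exact ⟨_, i, hi, ∅, by simp, hC, rfl⟩
  · have hxyz : x ∪ y ⊆ z := Set.union_subset hxz hyz
    exact ⟨h.isState_spanWithin hz hxyz,
      h.spanWithin_subset_of_isState hz hz subset_rfl hxyz,
      subset_spanWithin hx hxz Set.subset_union_left,
      subset_spanWithin hy hyz Set.subset_union_right,
      fun w hw hwz hxw hyw => h.spanWithin_subset_of_isState hz hw hwz (Set.union_subset hxw hyw)⟩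
end

section
/- Let (A, Con, ⊢, Δ) be an information system with witnesses satisfying condition (BC): for all finite X ⊆ A and i, j ∈ A with (i,X),(j,X) ∈ Con, (i,X) ⊢ a iff (j,X) ⊢ a for every a. Then the L-domain of states |A| is bounded-complete: every pair of states bounded above has a least upper bound. -/
/-! The candidate join of `x` and `y` is the set of elements entailed, by some witness, from a
finite subset of `x ∪ y`. Under (BC) an entailment `(i, Z) ⊢ a` can be re-witnessed by any `j`
with `(j, Z) ∈ Con`, so every state containing `x ∪ y` contains this set. A common upper bound
makes `x ∪ y` finitely consistent, which together with (BC) and axiom 10 makes the set a state. -/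

variable {A : Type*}

/-- Condition (BC). -/
def WitnessIndependent (Con : A → Finset A → Prop) (ent : A → Finset A → A → Prop) : Prop :=
  ∀ (i j : A) (X : Finset A), Con i X → Con j X → ∀ a, ent i X a ↔ ent j X a

def derivableFrom (ent : A → Finset A → A → Prop) (u : Set A) : Set A :=
  {a | ∃ (i : A) (Z : Finset A), ↑Z ⊆ u ∧ ent i Z a}

namespace IsISW

variable {Δ : A} {Con : A → Finset A → Prop} {ent : A → Finset A → A → Prop}

theorem ent_of_subset (h : IsISW Δ Con ent) (hBC : WitnessIndependent Con ent)
    {i k a : A} {Y Z : Finset A} (hkZ : Con k Z) (hYZ : Y ⊆ Z) (hent : ent i Y a) :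
    ent k Z a := by
  have hkY : Con k Y := h.ax2 k Z Y hYZ hkZ
  exact h.ax5 k Y Z a hkY hkZ hYZ ((hBC i k Y (h.dom i Y a hent) hkY a).mp hent)

theorem exists_finset_of_subset_derivableFrom {u : Set A} (F : Finset A)
    (hF : ↑F ⊆ derivableFrom ent u) :
    ∃ Z : Finset A, ↑Z ⊆ u ∧ ∀ a ∈ F, ∃ (i : A) (Y : Finset A), Y ⊆ Z ∧ ent i Y a := by
  classical
  induction F using Finset.induction_on with
  | empty => exact ⟨∅, by simp, by simp⟩
  | insert a F _ ih =>
    obtain ⟨Z, hZu, hZ⟩ := ih (fun b hb => hF (Finset.mem_insert_of_mem hb))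
    obtain ⟨i, Y, hYu, hent⟩ := hF (Finset.mem_insert_self a F)
    refine ⟨Z ∪ Y, by simpa using Set.union_subset hZu hYu, fun b hb => ?_⟩
    rcases Finset.mem_insert.mp hb with rfl | hb
    · exact ⟨i, Y, Finset.subset_union_right, hent⟩
    · obtain ⟨j, Yb, hYbZ, hentb⟩ := hZ b hb
      exact ⟨j, Yb, hYbZ.trans Finset.subset_union_left, hentb⟩

theorem exists_common_ent_of_subset_derivableFrom (h : IsISW Δ Con ent)
    (hBC : WitnessIndependent Con ent) {u : Set A}
    (hu : ∀ F : Finset A, ↑F ⊆ u → ∃ i, Con i F) (F : Finset A)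
    (hF : ↑F ⊆ derivableFrom ent u) :
    ∃ (k : A) (Z : Finset A), ↑Z ⊆ u ∧ Con k Z ∧ ∀ a ∈ F, ent k Z a := by
  obtain ⟨Z, hZu, hZ⟩ := exists_finset_of_subset_derivableFrom F hF
  obtain ⟨k, hkZ⟩ := hu Z hZu
  refine ⟨k, Z, hZu, hkZ, fun a ha => ?_⟩
  obtain ⟨i, Y, hYZ, hent⟩ := hZ a ha
  exact h.ent_of_subset hBC hkZ hYZ hent

theorem isState_derivableFrom (h : IsISW Δ Con ent) (hBC : WitnessIndependent Con ent)
    {u : Set A} (hu : ∀ F : Finset A, ↑F ⊆ u → ∃ i, Con i F) :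
    IsState Con ent (derivableFrom ent u) := by
  refine ⟨fun F hF => ?_, fun i _ X hX hiX a hent => ?_, fun a ⟨i, Z, hZu, hent⟩ => ?_⟩
  · obtain ⟨k, Z, hZu, hkZ, hentF⟩ := h.exists_common_ent_of_subset_derivableFrom hBC hu F hF
    obtain ⟨e, W, heW, hent_e, -, hentW⟩ := h.ax10 k Z F hkZ hentF
    exact ⟨e, ⟨k, Z, hZu, hent_e⟩, h.ax4 e W F heW hentW⟩
  · obtain ⟨k, Z, hZu, hkZ, hentX⟩ := h.exists_common_ent_of_subset_derivableFrom hBC hu X hX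
    have hkX : Con k X := h.ax4 k Z X hkZ hentX
    exact ⟨k, Z, hZu, h.ax6 k Z X a hkZ hentX ((hBC i k X hiX hkX a).mp hent)⟩
  · have hiZ : Con i Z := h.dom i Z a hent
    obtain ⟨e, W, heW, hent_e, hentW, hent_a⟩ := h.ax10 i Z {a} hiZ (by simpa using hent)
    refine ⟨e, ⟨i, Z, hZu, hent_e⟩, W, fun b hb => ⟨i, Z, hZu, hentW b hb⟩, heW, ?_⟩
    simpa using hent_a

theorem derivableFrom_subset_of_isState (h : IsISW Δ Con ent)
    (hBC : WitnessIndependent Con ent) {u w : Set A} (hw : IsState Con ent w) (huw : u ⊆ w) :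
    derivableFrom ent u ⊆ w := by
  rintro a ⟨i, Z, hZu, hent⟩
  have hZw : ↑Z ⊆ w := hZu.trans huw
  obtain ⟨j, hj, hjZ⟩ := hw.1 Z hZw
  exact hw.2.1 j hj Z hZw hjZ a ((hBC i j Z (h.dom i Z a hent) hjZ a).mp hent)

end IsISW

theorem subset_derivableFrom_of_isState {Con : A → Finset A → Prop}
    {ent : A → Finset A → A → Prop} {x u : Set A} (hx : IsState Con ent x) (hxu : x ⊆ u) :
    x ⊆ derivableFrom ent u := fun a ha =>
  let ⟨i, _, X, hXx, _, hent⟩ := hx.2.2 a ha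
  ⟨i, X, hXx.trans hxu, hent⟩

theorem stmt13 {Δ : A} {Con : A → Finset A → Prop} {ent : A → Finset A → A → Prop}
    (h : IsISW Δ Con ent)
    (hBC : ∀ (i j : A) (X : Finset A), Con i X → Con j X →
      ∀ a, ent i X a ↔ ent j X a) :
    ∀ x y : Set A, IsState Con ent x → IsState Con ent y →
      (∃ z : Set A, IsState Con ent z ∧ x ⊆ z ∧ y ⊆ z) →
      ∃ s : Set A, IsState Con ent s ∧ x ⊆ s ∧ y ⊆ s ∧
        ∀ w : Set A, IsState Con ent w → x ⊆ w → y ⊆ w → s ⊆ w := by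
  rintro x y hx hy ⟨z, hz, hxz, hyz⟩
  have hcon : ∀ F : Finset A, ↑F ⊆ x ∪ y → ∃ i, Con i F := fun F hF =>
    (hz.1 F (hF.trans (Set.union_subset hxz hyz))).imp fun _ => And.right
  exact ⟨derivableFrom ent (x ∪ y), h.isState_derivableFrom hBC hcon,
    subset_derivableFrom_of_isState hx Set.subset_union_left,
    subset_derivableFrom_of_isState hy Set.subset_union_right,
    fun w hw hxw hyw => h.derivableFrom_subset_of_isState hBC hw (Set.union_subset hxw hyw)⟩
end

section
/- Let D be an L-domain with basis B and least element ⊥. Define I(D) = (B, Con, ⊢, ⊥) where Con = {(i,X) : i ∈ B, X a finite subset of ↓i ∩ B} and (i,X) ⊢ a iff a ≪ ⨆ⁱX (the least upper bound of X in ↓i). Then I(D) is an information system with witnesses. -/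
variable {A : Type*}

variable {D : Type*}

/-- The way-below (approximation) relation on a poset. -/
def WayBelowP [PartialOrder D] (x y : D) : Prop :=
  ∀ S : Set D, S.Nonempty → DirectedOn (· ≤ ·) S → ∀ s, IsLUB S s → y ≤ s → ∃ u ∈ S, x ≤ u

/-- Directed completeness of a poset. -/
def IsDcpo (D : Type*) [PartialOrder D] : Prop :=
  ∀ S : Set D, S.Nonempty → DirectedOn (· ≤ ·) S → ∃ s, IsLUB S s

/-- `B` is a basis of the poset `D`. -/
def IsBasisOf [PartialOrder D] (B : Set D) : Prop :=
  ∀ x : D, ∃ S : Set D, S ⊆ {b ∈ B | WayBelowP b x} ∧ S.Nonempty ∧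
    DirectedOn (· ≤ ·) S ∧ IsLUB S x

/-- `D` is an L-domain: a directed-complete pointed poset in which any pair of
elements bounded by `z` has a least upper bound in `↓z` (continuity is imposed
separately via the existence of a basis). -/
def IsLDomain (D : Type*) [PartialOrder D] [OrderBot D] : Prop :=
  IsDcpo D ∧ ∀ x y z : D, x ≤ z → y ≤ z →
    ∃ s, s ≤ z ∧ x ≤ s ∧ y ≤ s ∧ ∀ w, w ≤ z → x ≤ w → y ≤ w → s ≤ w

/-- `s` is the least upper bound of `S` relative to the principal ideal `↓z`. -/
def LubIn [PartialOrder D] (z : D) (S : Set D) (s : D) : Prop :=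
  s ≤ z ∧ (∀ a ∈ S, a ≤ s) ∧ ∀ w, w ≤ z → (∀ a ∈ S, a ≤ w) → s ≤ w

/-- Consistency predicate of the information system `I(D)` built on a basis `B`. -/
def ConI [PartialOrder D] (B : Set D) (i : B) (X : Finset B) : Prop :=
  ∀ a ∈ X, (a : D) ≤ (i : D)

/-- Entailment of `I(D)`: `(i,X) ⊢ a` iff `a ≪ ⨆ⁱX`. -/
def entI [PartialOrder D] (B : Set D) (i : B) (X : Finset B) (a : B) : Prop :=
  ∃ s : D, LubIn (i : D) (Subtype.val '' (X : Set B)) s ∧ WayBelowP (a : D) s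
/-!
Consistency and entailment of `I(D)` are read off the relative joins `⨆ⁱX`, which exist
because `D` is an L-domain. Relative joins do not depend on the ambient ideal: if `i ≤ j`
and `X ⊆ ↓i`, then `⨆ⁱX = ⨆ʲX`, which gives the witness axioms (7)–(9). The remaining
axioms follow from the order properties of `≪`, except interpolation (10): finitely many
elements way below `s` lie way below one basis element way below `s`, because the
approximants of the approximants of `s` again form a directed set with supremum `s`.
-/

section WayBelow

variable [PartialOrder D] {x y z : D}

theorem WayBelowP.le (h : WayBelowP x y) : x ≤ y := by
  obtain ⟨u, hu, hxu⟩ := h {y} (Set.singleton_nonempty y) (directedOn_singleton y) y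
    isLUB_singleton le_rfl
  rwa [Set.mem_singleton_iff.mp hu] at hxu

theorem WayBelowP.trans_le (h : WayBelowP x y) (hyz : y ≤ z) : WayBelowP x z :=
  fun S hne hdir s hs hzs => h S hne hdir s hs (hyz.trans hzs)

theorem LE.le.trans_wayBelowP (hxy : x ≤ y) (h : WayBelowP y z) : WayBelowP x z := by
  intro S hne hdir s hs hzs
  obtain ⟨u, hu, hyu⟩ := h S hne hdir s hs hzs
  exact ⟨u, hu, hxy.trans hyu⟩

theorem bot_wayBelowP [OrderBot D] (y : D) : WayBelowP ⊥ y :=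
  fun _ ⟨u, hu⟩ _ _ _ _ => ⟨u, hu, bot_le⟩

end WayBelow

section LubIn

variable [PartialOrder D] {z z' s t : D} {S T : Set D}

theorem LubIn.le_of_subset (hs : LubIn z S s) (ht : LubIn z T t) (hST : S ⊆ T) : s ≤ t :=
  hs.2.2 t ht.1 fun a ha => ht.2.1 a (hST ha)

theorem LubIn.unique (hs : LubIn z S s) (ht : LubIn z S t) : s = t :=
  le_antisymm (hs.le_of_subset ht le_rfl) (ht.le_of_subset hs le_rfl)

theorem LubIn.eq_of_le (hzz' : z ≤ z') (hs : LubIn z S s) (ht : LubIn z' S t) : s = t := by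
  have hts : t ≤ s := ht.2.2 s (hs.1.trans hzz') hs.2.1
  exact le_antisymm (hs.2.2 t (hts.trans hs.1) ht.2.1) hts

theorem lubIn_empty [OrderBot D] (z : D) : LubIn z ∅ ⊥ :=
  ⟨bot_le, by simp, fun _ _ _ => bot_le⟩

theorem lubIn_singleton_self (z : D) : LubIn z {z} z :=
  ⟨le_rfl, by simp, fun _ _ h => h z rfl⟩

theorem IsLDomain.exists_lubIn [OrderBot D] (hL : IsLDomain D) (F : Finset D)
    (hF : ∀ a ∈ F, a ≤ z) : ∃ s, LubIn z F s := by
  classical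
  induction F using Finset.induction with
  | empty => exact ⟨⊥, by simpa using lubIn_empty z⟩
  | @insert a F _ ih =>
    obtain ⟨t, htz, hFt, ht_least⟩ := ih fun b hb => hF b (Finset.mem_insert_of_mem hb)
    obtain ⟨u, huz, hau, htu, hu_least⟩ := hL.2 a t z (hF a (Finset.mem_insert_self a F)) htz
    refine ⟨u, huz, ?_, fun w hwz hw => ?_⟩
    · simp only [Finset.coe_insert, Set.forall_mem_insert]
      exact ⟨hau, fun b hb => (hFt b hb).trans htu⟩
    · simp only [Finset.coe_insert, Set.forall_mem_insert] at hw
      exact hu_least w hwz hw.1 (ht_least w hwz hw.2)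

end LubIn

section Basis

variable [PartialOrder D] {B S : Set D} {s : D}

theorem DirectedOn.exists_forall_le_of_finset (hne : S.Nonempty) (hdir : DirectedOn (· ≤ ·) S)
    (F : Finset D) (hF : ↑F ⊆ S) : ∃ c ∈ S, ∀ a ∈ F, a ≤ c := by
  classical
  have := hne.to_subtype
  obtain ⟨c, hc⟩ := hdir.directed_val.finset_le (F.subtype (· ∈ S))
  exact ⟨c, c.2, fun a ha => hc ⟨a, hF ha⟩ (by simpa using ha)⟩

theorem IsBasisOf.exists_wayBelowP_mem (hB : IsBasisOf B) (hne : S.Nonempty)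
    (hdir : DirectedOn (· ≤ ·) S) (hs : IsLUB S s) {b : D} (hb : WayBelowP b s) :
    ∃ c ∈ S, WayBelowP b c := by
  choose T hTwb hTne hTdir hTlub using hB
  have hwb : ∀ c, ∀ v ∈ T c, WayBelowP v c := fun c v hv => (hTwb c hv).2
  set M : Set D := ⋃ c ∈ S, T c
  have hmemM : ∀ v, v ∈ M ↔ ∃ c ∈ S, v ∈ T c := by simp [M]
  have hMne : M.Nonempty := by
    obtain ⟨c, hc⟩ := hne
    obtain ⟨v, hv⟩ := hTne c
    exact ⟨v, (hmemM v).2 ⟨c, hc, hv⟩⟩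
  have hMdir : DirectedOn (· ≤ ·) M := by
    intro v₁ hv₁ v₂ hv₂
    obtain ⟨c₁, hc₁, hv₁⟩ := (hmemM v₁).1 hv₁
    obtain ⟨c₂, hc₂, hv₂⟩ := (hmemM v₂).1 hv₂
    obtain ⟨c, hc, hc₁c, hc₂c⟩ := hdir c₁ hc₁ c₂ hc₂
    obtain ⟨u₁, hu₁, hvu₁⟩ := hwb c₁ v₁ hv₁ (T c) (hTne c) (hTdir c) c (hTlub c) hc₁c
    obtain ⟨u₂, hu₂, hvu₂⟩ := hwb c₂ v₂ hv₂ (T c) (hTne c) (hTdir c) c (hTlub c) hc₂c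
    obtain ⟨u, hu, hu₁u, hu₂u⟩ := hTdir c u₁ hu₁ u₂ hu₂
    exact ⟨u, (hmemM u).2 ⟨c, hc, hu⟩, hvu₁.trans hu₁u, hvu₂.trans hu₂u⟩
  have hMlub : IsLUB M s := by
    refine ⟨fun v hv => ?_, fun w hw => hs.2 fun c hc => (hTlub c).2 fun v hv => ?_⟩
    · obtain ⟨c, hc, hv⟩ := (hmemM v).1 hv
      exact (hwb c v hv).le.trans (hs.1 hc)
    · exact hw ((hmemM v).2 ⟨c, hc, hv⟩)
  obtain ⟨v, hvM, hbv⟩ := hb M hMne hMdir s hMlub le_rfl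
  obtain ⟨c, hc, hvc⟩ := (hmemM v).1 hvM
  exact ⟨c, hc, hbv.trans_wayBelowP (hwb c v hvc)⟩

theorem IsBasisOf.exists_interpolant (hB : IsBasisOf B) (Y : Finset D)
    (hY : ∀ b ∈ Y, WayBelowP b s) : ∃ c ∈ B, WayBelowP c s ∧ ∀ b ∈ Y, WayBelowP b c := by
  classical
  obtain ⟨S, hSwb, hSne, hSdir, hSlub⟩ := hB s
  have : Nonempty D := ⟨s⟩
  choose! g hgS hg using fun b hb => hB.exists_wayBelowP_mem hSne hSdir hSlub (hY b hb)
  obtain ⟨c, hcS, hgc⟩ := hSdir.exists_forall_le_of_finset hSne (Y.image g)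
    (by rw [Finset.coe_image, Set.image_subset_iff]; exact hgS)
  exact ⟨c, (hSwb hcS).1, (hSwb hcS).2,
    fun b hb => (hg b hb).trans_le (hgc (g b) (Finset.mem_image_of_mem g hb))⟩

end Basis

section InformationSystem

variable [PartialOrder D] {B : Set D} {i j : B} {X Y : Finset B} {a : B}

theorem ConI.exists_lubIn [OrderBot D] (hL : IsLDomain D) (hX : ConI B i X) :
    ∃ s, LubIn (i : D) (Subtype.val '' (X : Set B)) s := by
  classical
  simpa using hL.exists_lubIn (X.image Subtype.val) (Finset.forall_mem_image.2 hX)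

theorem entI_iff_of_lubIn {s : D} (hs : LubIn (i : D) (Subtype.val '' (X : Set B)) s) :
    entI B i X a ↔ WayBelowP (a : D) s :=
  ⟨fun ⟨_, hs', h⟩ => hs'.unique hs ▸ h, fun h => ⟨s, hs, h⟩⟩

theorem entI_mono [OrderBot D] (hL : IsLDomain D) (hY : ConI B i Y) (hXY : X ⊆ Y)
    (h : entI B i X a) : entI B i Y a := by
  obtain ⟨s, hs, has⟩ := h
  obtain ⟨t, ht⟩ := hY.exists_lubIn hL
  exact ⟨t, ht, has.trans_le (hs.le_of_subset ht (Set.image_mono (by exact_mod_cast hXY)))⟩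

theorem entI_cut [OrderBot D] (hL : IsLDomain D) (hX : ConI B i X)
    (hY : ∀ b ∈ Y, entI B i X b) (h : entI B i Y a) : entI B i X a := by
  obtain ⟨t, ht, hat⟩ := h
  obtain ⟨s, hs⟩ := hX.exists_lubIn hL
  refine (entI_iff_of_lubIn hs).2 (hat.trans_le (ht.2.2 s hs.1 ?_))
  rintro _ ⟨b, hb, rfl⟩
  exact ((entI_iff_of_lubIn hs).1 (hY b hb)).le

theorem entI_iff_of_conI_singleton [OrderBot D] (hL : IsLDomain D) (hij : ConI B j {i})
    (hX : ConI B i X) : entI B i X a ↔ entI B j X a := by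
  have hij : (i : D) ≤ j := hij i (Finset.mem_singleton_self i)
  obtain ⟨s, hs⟩ := hX.exists_lubIn hL
  have hs' : LubIn (j : D) (Subtype.val '' (X : Set B)) s := by
    obtain ⟨t, ht⟩ := ConI.exists_lubIn (i := j) hL fun b hb => (hX b hb).trans hij
    rwa [hs.eq_of_le hij ht]
  rw [entI_iff_of_lubIn hs, entI_iff_of_lubIn hs']

theorem entI_interpolate [OrderBot D] (hL : IsLDomain D) (hB : IsBasisOf B) (hX : ConI B i X)
    (hY : ∀ b ∈ Y, entI B i X b) :
    ∃ e Z, ConI B e Z ∧ entI B i X e ∧ (∀ b ∈ Z, entI B i X b) ∧ ∀ b ∈ Y, entI B e Z b := by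
  classical
  obtain ⟨s, hs⟩ := hX.exists_lubIn hL
  obtain ⟨c, hcB, hcs, hYc⟩ := hB.exists_interpolant (Y.image Subtype.val) (by
    simpa [entI_iff_of_lubIn hs] using hY)
  let e : B := ⟨c, hcB⟩
  have hes : entI B i X e := (entI_iff_of_lubIn hs).2 hcs
  have he : LubIn (e : D) (Subtype.val '' (({e} : Finset B) : Set B)) c := by
    simpa using lubIn_singleton_self c
  refine ⟨e, {e}, fun b hb => by rw [Finset.mem_singleton.mp hb], hes, ?_, ?_⟩
  · simpa using hes
  · exact fun b hb => (entI_iff_of_lubIn he).2 (hYc b (Finset.mem_image_of_mem _ hb))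

end InformationSystem

theorem stmt14 [PartialOrder D] [OrderBot D] (B : Set D)
    (hL : IsLDomain D) (hB : IsBasisOf B) (hbot : (⊥ : D) ∈ B) :
    IsISW (⟨⊥, hbot⟩ : B) (ConI B) (entI B) := by
  exact {
    dom _ _ _ := fun ⟨_, hs, _⟩ b hb => (hs.2.1 b ⟨b, hb, rfl⟩).trans hs.1
    ax1 _ _ hb := by rw [Finset.mem_singleton.mp hb]
    ax2 _ _ _ hYX hX b hb := hX b (hYX hb)
    ax3 i := ⟨⊥, by simpa using lubIn_empty (i : D), bot_wayBelowP _⟩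
    ax4 _ _ _ _ hY b hb := by
      obtain ⟨s, hs, hbs⟩ := hY b hb
      exact hbs.le.trans hs.1
    ax5 _ _ _ _ _ hY hXY := entI_mono hL hY hXY
    ax6 _ _ _ _ hX := entI_cut hL hX
    ax7 i _ hij _ hX b hb := (hX b hb).trans (hij i (Finset.mem_singleton_self i))
    ax8 _ _ _ _ hij hX := (entI_iff_of_conI_singleton hL hij hX).1
    ax9 _ _ _ _ hij hX := (entI_iff_of_conI_singleton hL hij hX).2
    ax10 _ _ _ hX := entI_interpolate hL hB hX }
end

section
/- Let D be an L-domain with basis B and I(D) its associated information system with witnesses. Then every state x of I(D) is a directed subset of D. -/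
variable {A : Type*}

variable {D : Type*}

namespace IsState

variable {Con : A → Finset A → Prop} {ent : A → Finset A → A → Prop} {x : Set A}

theorem nonempty (hx : IsState Con ent x) : x.Nonempty :=
  let ⟨i, hi, _⟩ := hx.1 ∅ (by simp)
  ⟨i, hi⟩

theorem exists_con_pair [DecidableEq A] (hx : IsState Con ent x) {a b : A} (ha : a ∈ x)
    (hb : b ∈ x) : ∃ i ∈ x, Con i {a, b} :=
  hx.1 {a, b} (by simp [Set.insert_subset_iff, ha, hb])

theorem directedOn_image_val [PartialOrder D] {B : Set D} {x : Set B}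
    (hx : IsState (ConI B) (entI B) x) : DirectedOn (· ≤ ·) (Subtype.val '' x) := by
  classical
  rintro _ ⟨a, ha, rfl⟩ _ ⟨b, hb, rfl⟩
  obtain ⟨i, hi, hab⟩ := hx.exists_con_pair ha hb
  exact ⟨i, Set.mem_image_of_mem _ hi, hab a (by simp), hab b (by simp)⟩

end IsState

theorem stmt15_general [PartialOrder D] (B : Set D)
    (x : Set B) (hx : IsState (ConI B) (entI B) x) :
    (Subtype.val '' x).Nonempty ∧ DirectedOn (· ≤ ·) (Subtype.val '' x) :=
  ⟨hx.nonempty.image _, hx.directedOn_image_val⟩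

theorem stmt15 [PartialOrder D] [OrderBot D] (B : Set D)
    (hL : IsLDomain D) (hB : IsBasisOf B) (hbot : (⊥ : D) ∈ B)
    (x : Set B) (hx : IsState (ConI B) (entI B) x) :
    (Subtype.val '' x).Nonempty ∧ DirectedOn (· ≤ ·) (Subtype.val '' x) :=
  stmt15_general B x hx
end

section
/- Let D be an L-domain with basis B. For every α ∈ D, the set st(α) = {a ∈ B : a ≪ α} is a state of the information system with witnesses I(D), and the maps α ↦ st(α) and x ↦ ⨆x are mutually inverse order-isomorphisms between D and the poset of states of I(D) ordered by inclusion. -/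
variable {A : Type*}

variable {D : Type*}

section Aux

variable [PartialOrder D]

/-- Way-below is stable under `≤` on both sides. -/
lemma wb_mono {a b c d : D} (hab : a ≤ b) (hbc : WayBelowP b c) (hcd : c ≤ d) :
    WayBelowP a d := fun S hne hdir s hlub hds => by
  obtain ⟨u, hu, hbu⟩ := hbc S hne hdir s hlub (hcd.trans hds)
  exact ⟨u, hu, hab.trans hbu⟩

/-- In the presence of a basis, way-below implies `≤`. -/
lemma wb_le {B : Set D} (hB : IsBasisOf B) {a α : D} (h : WayBelowP a α) : a ≤ α := by
  obtain ⟨S, hS, hne, hdir, hlub⟩ := hB α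
  obtain ⟨u, hu, hau⟩ := h S hne hdir α hlub le_rfl
  exact hau.trans (hlub.1 hu)

lemma bot_wb [OrderBot D] (y : D) : WayBelowP (⊥ : D) y :=
  fun S hne _ _ _ _ => ⟨hne.some, hne.some_mem, bot_le⟩

/-- Finite subsets of a directed set have upper bounds in the set. -/
lemma dir_finset_le {S : Set D} (hdir : DirectedOn (· ≤ ·) S) (hne : S.Nonempty)
    (F : Finset D) : (∀ a ∈ F, ∃ u ∈ S, a ≤ u) → ∃ i ∈ S, ∀ a ∈ F, a ≤ i := by
  classical
  induction F using Finset.induction_on with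
  | empty => exact fun _ => ⟨hne.some, hne.some_mem, by simp⟩
  | insert a F ha ih =>
    intro h
    obtain ⟨i, hi, hFi⟩ := ih (fun b hb => h b (Finset.mem_insert_of_mem hb))
    obtain ⟨u, hu, hau⟩ := h a (Finset.mem_insert_self a F)
    obtain ⟨z, hz, hiz, huz⟩ := hdir i hi u hu
    refine ⟨z, hz, fun b hb => ?_⟩
    rcases Finset.mem_insert.1 hb with rfl | hb
    · exact hau.trans huz
    · exact (hFi b hb).trans hiz

/-- The set of double approximants of `α` from the basis: it is nonempty,
directed, und has lub `α`. -/
lemma double_approx [OrderBot D] {B : Set D} (hB : IsBasisOf B) (hbot : (⊥ : D) ∈ B)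
    (α : D) :
    ({c | c ∈ B ∧ ∃ d ∈ B, WayBelowP d α ∧ WayBelowP c d} : Set D).Nonempty ∧
    DirectedOn (· ≤ ·) {c | c ∈ B ∧ ∃ d ∈ B, WayBelowP d α ∧ WayBelowP c d} ∧
    IsLUB {c | c ∈ B ∧ ∃ d ∈ B, WayBelowP d α ∧ WayBelowP c d} α := by
  set T : Set D := {c | c ∈ B ∧ ∃ d ∈ B, WayBelowP d α ∧ WayBelowP c d} with hT
  obtain ⟨S, hS, hne, hdir, hlub⟩ := hB α
  have hSmem : ∀ u ∈ S, u ∈ B ∧ WayBelowP u α := fun u hu => hS hu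
  refine ⟨⟨⊥, hbot, hne.some, (hSmem _ hne.some_mem).1, (hSmem _ hne.some_mem).2,
      bot_wb _⟩, ?_, ?_⟩
  · -- directedness
    rintro c₁ ⟨hc₁B, d₁, hd₁B, hd₁α, hc₁d₁⟩ c₂ ⟨hc₂B, d₂, hd₂B, hd₂α, hc₂d₂⟩
    obtain ⟨u₁, hu₁, hdu₁⟩ := hd₁α S hne hdir α hlub le_rfl
    obtain ⟨u₂, hu₂, hdu₂⟩ := hd₂α S hne hdir α hlub le_rfl
    obtain ⟨d, hd, h₁d, h₂d⟩ := hdir u₁ hu₁ u₂ hu₂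
    have hdα : WayBelowP d α := (hSmem d hd).2
    have hc₁d : WayBelowP c₁ d := wb_mono le_rfl hc₁d₁ (hdu₁.trans h₁d)
    have hc₂d : WayBelowP c₂ d := wb_mono le_rfl hc₂d₂ (hdu₂.trans h₂d)
    obtain ⟨Sd, hSd, hdne, hddir, hdlub⟩ := hB d
    obtain ⟨v₁, hv₁, hcv₁⟩ := hc₁d Sd hdne hddir d hdlub le_rfl
    obtain ⟨v₂, hv₂, hcv₂⟩ := hc₂d Sd hdne hddir d hdlub le_rfl
    obtain ⟨c, hc, h₁c, h₂c⟩ := hddir v₁ hv₁ v₂ hv₂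
    exact ⟨c, ⟨(hSd hc).1, d, (hSmem d hd).1, hdα, (hSd hc).2⟩,
      hcv₁.trans h₁c, hcv₂.trans h₂c⟩
  · constructor
    · rintro c ⟨_, d, _, hdα, hcd⟩
      exact (wb_le hB hcd).trans (wb_le hB hdα)
    · intro w hw
      refine hlub.2 fun d hd => ?_
      obtain ⟨Sd, hSd, hdne, hddir, hdlub⟩ := hB d
      refine hdlub.2 fun c hc => hw ⟨(hSd hc).1, d, (hSmem d hd).1, (hSmem d hd).2,
        (hSd hc).2⟩

end Aux

theorem stmt16 [PartialOrder D] [OrderBot D] (B : Set D)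
    (hL : IsLDomain D) (hB : IsBasisOf B) (hbot : (⊥ : D) ∈ B) :
    -- st(α) is a state
    (∀ α : D, IsState (ConI B) (entI B) {a : B | WayBelowP (a : D) α}) ∧
    -- sp ∘ st = id : the supremum of st(α) is α
    (∀ α : D, IsLUB (Subtype.val '' {a : B | WayBelowP (a : D) α}) α) ∧
    -- st ∘ sp = id
    (∀ x : Set B, IsState (ConI B) (entI B) x →
      ∀ s : D, IsLUB (Subtype.val '' x) s → x = {a : B | WayBelowP (a : D) s}) ∧
    -- both maps are order-isomorphisms
    (∀ α β : D, α ≤ β ↔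
      {a : B | WayBelowP (a : D) α} ⊆ {a : B | WayBelowP (a : D) β}) := by
  classical
  refine ⟨?_, ?_, ?_, ?_⟩
  · -- st(α) is a state
    intro α
    obtain ⟨S, hS, hne, hdir, hlub⟩ := hB α
    have hSmem : ∀ u ∈ S, u ∈ B ∧ WayBelowP u α := fun u hu => hS hu
    refine ⟨?_, ?_, ?_⟩
    · -- ST1
      intro F hF
      have hside : ∀ u ∈ F.image Subtype.val, ∃ v ∈ S, u ≤ v := by
        intro u hu
        obtain ⟨b, hbF, rfl⟩ := Finset.mem_image.1 hu
        exact hF hbF S hne hdir α hlub le_rfl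
      obtain ⟨i, hiS, hile⟩ := dir_finset_le hdir hne (F.image Subtype.val) hside
      exact ⟨⟨i, (hSmem i hiS).1⟩, (hSmem i hiS).2,
        fun a ha => hile _ (Finset.mem_image_of_mem _ ha)⟩
    · -- ST2
      rintro i hi X hX hCon a ⟨s, ⟨hsi, -, -⟩, has⟩
      exact wb_mono le_rfl has (hsi.trans (wb_le hB hi))
    · -- ST3
      intro a ha
      obtain ⟨hTne, hTdir, hTlub⟩ := double_approx hB hbot α
      obtain ⟨c, ⟨hcB, d, hdB, hdα, hcd⟩, hac⟩ := ha _ hTne hTdir α hTlub le_rfl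
      refine ⟨⟨d, hdB⟩, hdα, {⟨d, hdB⟩}, ?_, ?_, ?_⟩
      · intro b hb
        simp only [Finset.coe_singleton, Set.mem_singleton_iff] at hb
        subst hb; exact hdα
      · intro b hb
        simp only [Finset.mem_singleton] at hb
        subst hb; exact le_rfl
      · refine ⟨d, ⟨le_rfl, ?_, ?_⟩, wb_mono hac hcd le_rfl⟩
        · rintro u ⟨b, hb, rfl⟩
          simp only [Finset.coe_singleton, Set.mem_singleton_iff] at hb
          subst hb; exact le_rfl
        · intro w hw hub
          exact hub d ⟨⟨d, hdB⟩, by simp, rfl⟩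
  · -- sp ∘ st = id
    intro α
    obtain ⟨S, hS, hne, hdir, hlub⟩ := hB α
    constructor
    · rintro _ ⟨a, ha, rfl⟩
      exact wb_le hB ha
    · intro w hw
      exact hlub.2 fun u hu => hw ⟨⟨u, (hS hu).1⟩, (hS hu).2, rfl⟩
  · -- st ∘ sp = id
    rintro x ⟨h1, h2, h3⟩ s hs
    obtain ⟨i0, hi0, -⟩ := h1 ∅ (by simp)
    ext a
    simp only [Set.mem_setOf_eq]
    constructor
    · intro ha
      obtain ⟨i, hi, X, hX, hCon, t, ⟨hti, -, -⟩, hat⟩ := h3 a ha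
      exact wb_mono le_rfl hat (hti.trans (hs.1 ⟨i, hi, rfl⟩))
    · intro ha
      set T : Set D := {c | c ∈ B ∧ ∃ b : B, b ∈ x ∧ WayBelowP c (b : D)} with hT
      have hTne : T.Nonempty := ⟨⊥, hbot, i0, hi0, bot_wb _⟩
      have hTdir : DirectedOn (· ≤ ·) T := by
        rintro c₁ ⟨hc₁B, b₁, hb₁, hc₁⟩ c₂ ⟨hc₂B, b₂, hb₂, hc₂⟩
        obtain ⟨i, hi, hcon⟩ := h1 {b₁, b₂} (by
          intro b hb
          simp only [Finset.coe_insert, Finset.coe_singleton, Set.mem_insert_iff,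
            Set.mem_singleton_iff] at hb
          rcases hb with rfl | rfl <;> assumption)
        have h1' : WayBelowP c₁ (i : D) :=
          wb_mono le_rfl hc₁ (hcon b₁ (by simp))
        have h2' : WayBelowP c₂ (i : D) :=
          wb_mono le_rfl hc₂ (hcon b₂ (by simp))
        obtain ⟨Si, hSi, hine, hidir, hilub⟩ := hB (i : D)
        obtain ⟨v₁, hv₁, hcv₁⟩ := h1' Si hine hidir _ hilub le_rfl
        obtain ⟨v₂, hv₂, hcv₂⟩ := h2' Si hine hidir _ hilub le_rfl
        obtain ⟨c, hc, h₁c, h₂c⟩ := hidir v₁ hv₁ v₂ hv₂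
        exact ⟨c, ⟨(hSi hc).1, i, hi, (hSi hc).2⟩, hcv₁.trans h₁c, hcv₂.trans h₂c⟩
      have hTlub : IsLUB T s := by
        constructor
        · rintro c ⟨-, b, hb, hcb⟩
          exact (wb_le hB hcb).trans (hs.1 ⟨b, hb, rfl⟩)
        · intro w hw
          refine hs.2 ?_
          rintro _ ⟨b, hb, rfl⟩
          obtain ⟨Sb, hSb, hbne, hbdir, hblub⟩ := hB (b : D)
          exact hblub.2 fun c hc => hw ⟨(hSb hc).1, b, hb, (hSb hc).2⟩
      obtain ⟨c, ⟨hcB, b, hb, hcb⟩, hac⟩ := ha T hTne hTdir s hTlub le_rfl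
      have hab : WayBelowP (a : D) (b : D) := wb_mono hac hcb le_rfl
      refine h2 b hb {b} (by simp [hb]) (fun e he => by
          simp only [Finset.mem_singleton] at he; subst he; exact le_rfl) a
        ⟨(b : D), ⟨le_rfl, ?_, ?_⟩, hab⟩
      · rintro u ⟨e, he, rfl⟩
        simp only [Finset.coe_singleton, Set.mem_singleton_iff] at he
        subst he; exact le_rfl
      · intro w hw hub
        exact hub b ⟨b, by simp, rfl⟩
  · -- order iso
    intro α β
    constructor
    · intro h a ha
      exact wb_mono le_rfl ha h
    · intro h
      obtain ⟨S, hS, hne, hdir, hlub⟩ := hB α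
      refine hlub.2 fun u hu => ?_
      have hu' : WayBelowP u β := h (show (⟨u, (hS hu).1⟩ : B) ∈ _ from (hS hu).2)
      exact wb_le hB hu'
end

section
/- Let (A, con, ⊢) be a continuous information system. Set Con = (A ∪ {∅'}) × con (with a fresh token ∅' adjoined) and define (i,X) ⊨ a iff X ⊢ a. Then (A ∪ {∅'}, Con, ⊨, ∅') is an information system with witnesses satisfying condition (BC). -/
variable {A : Type*}

/-- A continuous information system (Hoofman). -/
structure IsCIS (con : Finset A → Prop) (entC : Finset A → A → Prop) : Prop where
  dom : ∀ X a, entC X a → con X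
  ax1 : con ∅
  ax2 : ∀ X Y : Finset A, Y ⊆ X → con X → con Y
  ax3 : ∀ a : A, con {a}
  ax4 : ∀ (X Y : Finset A), con X → (∀ b ∈ Y, entC X b) → con Y
  ax5 : ∀ (X Y : Finset A) (a : A), con X → con Y → X ⊆ Y → entC X a → entC Y a
  ax6 : ∀ (X : Finset A) (a : A), con X →
    ((∃ Z : Finset A, con Z ∧ (∀ b ∈ Z, entC X b) ∧ entC Z a) ↔ entC X a)

/-- Remove the adjoined token from a finite set of tokens. -/
def strip (X : Finset (Option A)) : Finset A :=
  X.filterMap id (by intro a a' b h1 h2; cases a <;> cases a' <;> simp_all)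


lemma mem_strip {X : Finset (Option A)} {b : A} : b ∈ strip X ↔ some b ∈ X := by
  simp [strip, Finset.mem_filterMap]

lemma strip_mono {X Y : Finset (Option A)} (h : Y ⊆ X) : strip Y ⊆ strip X := by
  intro b hb; rw [mem_strip] at *; exact h hb

theorem stmt17 (con : Finset A → Prop) (entC : Finset A → A → Prop)
    (h : IsCIS con entC) :
    IsISW (none : Option A)
      (fun _ X => con (strip X))
      (fun _ X a => con (strip X) ∧
        (a = none ∨ ∃ b : A, a = some b ∧ entC (strip X) b)) ∧
    -- condition (BC)
    (∀ (i j : Option A) (X : Finset (Option A)) (a : Option A),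
      con (strip X) → con (strip X) →
      ((con (strip X) ∧ (a = none ∨ ∃ b : A, a = some b ∧ entC (strip X) b)) ↔
       (con (strip X) ∧ (a = none ∨ ∃ b : A, a = some b ∧ entC (strip X) b)))) := by
  refine ⟨?_, fun i j X a _ _ => Iff.rfl⟩
  constructor
  · exact fun i X a ha => ha.1
  · intro i
    cases i with
    | none => convert h.ax1; ext b; simp [mem_strip]
    | some a => convert h.ax3 a; ext b; simp [mem_strip]
  · intro i X Y hYX hX
    exact h.ax2 _ _ (strip_mono hYX) hX
  · intro i
    exact ⟨by simpa [strip] using h.ax1, Or.inl rfl⟩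
  · intro i X Y hX hY
    refine h.ax4 (strip X) (strip Y) hX ?_
    intro b hb
    obtain ⟨hc, hd⟩ := hY (some b) (mem_strip.mp hb)
    rcases hd with h1 | ⟨b', hb', he⟩
    · simp at h1
    · cases hb'; exact he
  · rintro i X Y a hX hY hXY ⟨_, ha⟩
    refine ⟨hY, ?_⟩
    rcases ha with rfl | ⟨b, rfl, hb⟩
    · exact Or.inl rfl
    · exact Or.inr ⟨b, rfl, h.ax5 _ _ _ hX hY (strip_mono hXY) hb⟩
  · rintro i X Y a hX hY ⟨hYcon, ha⟩
    refine ⟨hX, ?_⟩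
    rcases ha with rfl | ⟨b, rfl, hb⟩
    · exact Or.inl rfl
    · refine Or.inr ⟨b, rfl, (h.ax6 (strip X) b hX).mp ⟨strip Y, hYcon, ?_, hb⟩⟩
      intro c hc
      obtain ⟨_, hd⟩ := hY (some c) (mem_strip.mp hc)
      rcases hd with h1 | ⟨b', hb', he⟩
      · simp at h1
      · cases hb'; exact he
  · exact fun i j _ X hX => hX
  · exact fun i j X a _ _ ha => ha
  · exact fun i j X a _ _ ha => ha
  · intro i X Y hX hY
    classical
    have hW : ∀ c ∈ strip Y, entC (strip X) c := by
      intro c hc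
      obtain ⟨_, hd⟩ := hY (some c) (mem_strip.mp hc)
      rcases hd with h1 | ⟨b', hb', he⟩
      · simp at h1
      · cases hb'; exact he
    have hch : ∀ c ∈ strip Y, ∃ Z, con Z ∧ (∀ b ∈ Z, entC (strip X) b) ∧ entC Z c :=
      fun c hc => (h.ax6 (strip X) c hX).mpr (hW c hc)
    choose f hf1 hf2 hf3 using hch
    set Z : Finset A := (strip Y).attach.biUnion (fun c => f c.1 c.2) with hZ
    have hZent : ∀ b ∈ Z, entC (strip X) b := by
      intro b hb
      simp only [hZ, Finset.mem_biUnion, Finset.mem_attach, true_and] at hb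
      obtain ⟨⟨c, hc⟩, hbc⟩ := hb
      exact hf2 c hc b hbc
    have hZcon : con Z := h.ax4 _ _ hX hZent
    refine ⟨none, Z.image some, ?_, ⟨hX, Or.inl rfl⟩, ?_, ?_⟩
    · have : strip (Z.image some) = Z := by
        ext b; simp [mem_strip]
      rw [this]; exact hZcon
    · intro b hb
      simp only [Finset.mem_image] at hb
      obtain ⟨c, hc, rfl⟩ := hb
      exact ⟨hX, Or.inr ⟨c, rfl, hZent c hc⟩⟩
    · intro b hb
      have hs : strip (Z.image some) = Z := by ext b; simp [mem_strip]
      refine ⟨by rw [hs]; exact hZcon, ?_⟩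
      obtain ⟨_, hd⟩ := hY b hb
      rcases hd with rfl | ⟨b', rfl, he⟩
      · exact Or.inl rfl
      · refine Or.inr ⟨b', rfl, ?_⟩
        rw [hs]
        have hbY : b' ∈ strip Y := mem_strip.mpr hb
        exact h.ax5 _ _ _ (hf1 b' hbY) hZcon
          (fun x hx => Finset.mem_biUnion.mpr ⟨⟨b', hbY⟩, Finset.mem_attach _ _, hx⟩)
          (hf3 b' hbY)
end

section
/- Let (A, Con, ⊢, Δ) be an information system with witnesses satisfying condition (BC). Define con = ⋃_i Con(i) and X ⊩ a iff there exists i with X ∈ Con(i) and (i,X) ⊢ a. Then C(A) = (A, con, ⊩) is a continuous information system. -/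
/-! By (BC), whether `X` entails `a` does not depend on the witness `i` with `Con i X`, so
the entailment `⊩` of `C(A)` can always be computed at any witness of `X` at hand. With a
single witness fixed, the axioms of a continuous information system are those of the
information system with witnesses at that witness; interpolation comes from (ISW10). -/

variable {A : Type*}

/-- Condition (BC). -/
def EntWitnessIndependent (Con : A → Finset A → Prop) (ent : A → Finset A → A → Prop) :
    Prop :=
  ∀ (i j : A) (X : Finset A), Con i X → Con j X → ∀ a, ent i X a ↔ ent j X a

namespace EntWitnessIndependent

variable {Con : A → Finset A → Prop} {ent : A → Finset A → A → Prop}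

theorem ent_of_exists (hBC : EntWitnessIndependent Con ent) {j : A} {X : Finset A} {a : A}
    (hX : Con j X) (ha : ∃ i, Con i X ∧ ent i X a) : ent j X a := by
  obtain ⟨i, hiX, hia⟩ := ha
  exact (hBC i j X hiX hX a).mp hia

theorem forall_ent_of_forall_exists (hBC : EntWitnessIndependent Con ent) {j : A}
    {X Y : Finset A} (hX : Con j X) (hY : ∀ b ∈ Y, ∃ i, Con i X ∧ ent i X b) :
    ∀ b ∈ Y, ent j X b :=
  fun b hb => hBC.ent_of_exists hX (hY b hb)

end EntWitnessIndependent

namespace IsISW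

variable {Δ : A} {Con : A → Finset A → Prop} {ent : A → Finset A → A → Prop}

theorem exists_interpolant (h : IsISW Δ Con ent) {i : A} {X : Finset A} {a : A}
    (hX : Con i X) (ha : ent i X a) :
    ∃ e Z, Con e Z ∧ (∀ b ∈ Z, ent i X b) ∧ ent e Z a := by
  obtain ⟨e, Z, heZ, -, hXZ, hZa⟩ := h.ax10 i X {a} hX (by simpa using ha)
  exact ⟨e, Z, heZ, hXZ, hZa a (Finset.mem_singleton_self a)⟩

variable (h : IsISW Δ Con ent) (hBC : EntWitnessIndependent Con ent)
include h hBC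

theorem ent_mono_of_exists {X Y : Finset A} {a : A} {j : A} (hY : Con j Y) (hXY : X ⊆ Y)
    (ha : ∃ i, Con i X ∧ ent i X a) : ent j Y a :=
  have hX : Con j X := h.ax2 j Y X hXY hY
  h.ax5 j X Y a hX hY hXY (hBC.ent_of_exists hX ha)

theorem ent_cut_of_exists {i : A} {X Z : Finset A} {a : A} (hX : Con i X)
    (hXZ : ∀ b ∈ Z, ∃ j, Con j X ∧ ent j X b) (hZa : ∃ k, Con k Z ∧ ent k Z a) :
    ent i X a := by
  have hiXZ : ∀ b ∈ Z, ent i X b := hBC.forall_ent_of_forall_exists hX hXZ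
  have hiZ : Con i Z := h.ax4 i X Z hX hiXZ
  exact h.ax6 i X Z a hX hiXZ (hBC.ent_of_exists hiZ hZa)

end IsISW

theorem stmt18 {Δ : A} {Con : A → Finset A → Prop} {ent : A → Finset A → A → Prop}
    (h : IsISW Δ Con ent)
    (hBC : ∀ (i j : A) (X : Finset A), Con i X → Con j X →
      ∀ a, ent i X a ↔ ent j X a) :
    IsCIS (fun X : Finset A => ∃ i, Con i X)
      (fun (X : Finset A) (a : A) => ∃ i, Con i X ∧ ent i X a) := by
  replace hBC : EntWitnessIndependent Con ent := hBC
  refine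
    { dom := fun _ _ ⟨i, hX, _⟩ => ⟨i, hX⟩
      ax1 := ⟨Δ, h.con_empty Δ⟩
      ax2 := fun X Y hYX ⟨i, hX⟩ => ⟨i, h.ax2 i X Y hYX hX⟩
      ax3 := fun a => ⟨a, h.ax1 a⟩
      ax4 := fun X Y ⟨i, hX⟩ hY => ⟨i, h.ax4 i X Y hX (hBC.forall_ent_of_forall_exists hX hY)⟩
      ax5 := fun _ _ _ _ ⟨j, hY⟩ hXY ha => ⟨j, hY, h.ent_mono_of_exists hBC hY hXY ha⟩
      ax6 := ?_ }
  rintro X a ⟨i, hX⟩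
  refine ⟨fun ⟨Z, _, hXZ, hZa⟩ => ⟨i, hX, h.ent_cut_of_exists hBC hX hXZ hZa⟩, fun ha => ?_⟩
  obtain ⟨e, Z, heZ, hXZ, hZa⟩ := h.exists_interpolant hX (hBC.ent_of_exists hX ha)
  exact ⟨Z, ⟨e, heZ⟩, fun b hb => ⟨i, hX, hXZ b hb⟩, ⟨e, heZ, hZa⟩⟩
end
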